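/- arXiv:1410.7558 — 2 statements merged into one kernel-verified Lean document; each statement's English description precedes it below -/
import Mathlib

section
/- Let Ā ≥ 0 and Ē ≥ 0 be such that ‖A(t)‖, ‖A'(t)‖ ≤ Ā and ‖E(t)‖, ‖E'(t)‖ ≤ Ē for all t ∈ [0,T]. Then for every t ∈ [0,T]: ‖E(t) − E'(t)‖ ≤ 2√(dT) · Ē · (∫₀ᵀ ‖A(s) − A'(s)‖² ds)^{1/2} · e^{2√d (Ē/λ + Ā) T}. -/
/-!
The difference `F = E - E'` solves the linear equation
`F' = -(AᵀF + FA) - (EF + FE')/λ - ((A - A')ᵀE' + E'(A - A'))` with `F(0) = 0`,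
so `‖F'‖ ≤ 2(Ē/λ + Ā)‖F‖ + 2Ē‖A - A'‖`. Grönwall's inequality with this time-dependent forcing
gives `‖F(t)‖ ≤ e^{2(Ē/λ + Ā)T} · 2Ē ∫₀ᵀ ‖A - A'‖`, and Cauchy–Schwarz bounds the integral by
`√T (∫₀ᵀ ‖A - A'‖²)^{1/2}`; the two factors `√d ≥ 1` are slack.
-/

open Matrix Set intervalIntegral
open scoped Matrix

noncomputable section

/-- Frobenius norm of a real matrix. -/
def frob {m n : Type*} [Fintype m] [Fintype n] (M : Matrix m n ℝ) : ℝ :=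
  Real.sqrt (∑ i, ∑ j, (M i j) ^ 2)

open Topology Real

section Gronwall

variable {E : Type*} [NormedAddCommGroup E] [NormedSpace ℝ E]

theorem HasDerivWithinAt.liminf_right_slope_norm_sub_le {f : ℝ → E} {B : ℝ → ℝ} {f' : E}
    {B' x r : ℝ} (hf : HasDerivWithinAt f f' (Ici x) x) (hB : HasDerivWithinAt B B' (Ici x) x)
    (hr : ‖f'‖ - B' < r) :
    ∃ᶠ z in 𝓝[>] x, (z - x)⁻¹ * ((‖f z‖ - B z) - (‖f x‖ - B x)) < r := by
  obtain ⟨r₁, hf'r₁, hr₁⟩ := exists_between (show ‖f'‖ < r + B' by linarith)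
  have hslopeB : ∀ᶠ z in 𝓝[>] x, r₁ - r < slope B x z :=
    (hasDerivWithinAt_iff_tendsto_slope' (lt_irrefl x)).1 hB.Ioi_of_Ici
      (Ioi_mem_nhds (by linarith))
  refine ((hf.liminf_right_slope_norm_le hf'r₁).and_eventually hslopeB).mono ?_
  rintro z ⟨hz_norm, hz_B⟩
  rw [slope_def_field, div_eq_inv_mul] at hz_B
  linarith [mul_sub ((z - x)⁻¹) (‖f z‖ - ‖f x‖) (B z - B x)]

theorem exists_continuous_eqOn_Icc {a b : ℝ} {g : ℝ → ℝ} (hab : a ≤ b)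
    (hg : ContinuousOn g (Icc a b)) : ∃ g' : ℝ → ℝ, Continuous g' ∧ EqOn g' g (Icc a b) :=
  ⟨IccExtend hab ((Icc a b).domRestrict g),
    (continuousOn_iff_continuous_domRestrict.1 hg).Icc_extend',
    fun _ hx => IccExtend_of_mem hab _ hx⟩

theorem norm_le_exp_mul_add_integral_of_norm_deriv_right_le {f f' : ℝ → E} {g : ℝ → ℝ}
    {δ K a b : ℝ} (hK : 0 ≤ K) (hf : ContinuousOn f (Icc a b))
    (hf' : ∀ x ∈ Ico a b, HasDerivWithinAt f (f' x) (Ici x) x)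
    (hg : ContinuousOn g (Icc a b)) (hg₀ : ∀ x ∈ Icc a b, 0 ≤ g x) (ha : ‖f a‖ ≤ δ)
    (bound : ∀ x ∈ Ico a b, ‖f' x‖ ≤ K * ‖f x‖ + g x) :
    ∀ x ∈ Icc a b, ‖f x‖ ≤ exp (K * (x - a)) * (δ + ∫ s in a..x, g s) := by
  intro x hx
  obtain ⟨g', hg'c, hg'g⟩ := exists_continuous_eqOn_Icc (hx.1.trans hx.2) hg
  -- `B' = K * B + exp (K * (t - a)) * g ≥ K * B + g`, so `‖f‖ - B` obeys Grönwall with zero data.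
  set B : ℝ → ℝ := fun t => exp (K * (t - a)) * (δ + ∫ s in a..t, g' s)
  have hB : ∀ t, HasDerivAt B (K * B t + exp (K * (t - a)) * g' t) t := fun t => by
    have hexp := ((hasDerivAt_id t).sub_const a |>.const_mul K).exp
    have hint := (hg'c.integral_hasStrictDerivAt a t).hasDerivAt.const_add δ
    exact (hexp.mul hint).congr_deriv (by simp only [B, id]; ring)
  have hBc : Continuous B := continuous_iff_continuousAt.2 fun t => (hB t).continuousAt
  have hgronwall := le_gronwallBound_of_liminf_deriv_right_le
    ((continuous_norm.comp_continuousOn hf).sub hBc.continuousOn)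
    (fun t ht _ hr => (hf' t ht).liminf_right_slope_norm_sub_le (hB t).hasDerivWithinAt hr)
    (show ‖f a‖ - B a ≤ 0 by simpa [B] using ha)
    (K := K) (ε := 0) (fun t ht => by
      have hgt : g t = g' t := (hg'g (Ico_subset_Icc_self ht)).symm
      have hexp : 1 ≤ exp (K * (t - a)) := one_le_exp (mul_nonneg hK (sub_nonneg.2 ht.1))
      have hbound := bound t ht
      simp only [Pi.sub_apply, Function.comp_apply]
      nlinarith [hg₀ t (Ico_subset_Icc_self ht)]) x hx
  rw [gronwallBound_ε0_δ0] at hgronwall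
  have hgg' : ∫ s in a..x, g' s = ∫ s in a..x, g s :=
    integral_congr (hg'g.mono (by rw [uIcc_of_le hx.1]; exact Icc_subset_Icc_right hx.2))
  simp only [Pi.sub_apply, Function.comp_apply, B, hgg'] at hgronwall
  linarith

end Gronwall

theorem intervalIntegral_le_sqrt_mul_sqrt_integral_sq {h : ℝ → ℝ} {a b : ℝ} (hab : a ≤ b)
    (hh : IntervalIntegrable h MeasureTheory.volume a b)
    (hh2 : IntervalIntegrable (fun s => h s ^ 2) MeasureTheory.volume a b) :
    ∫ s in a..b, h s ≤ √(b - a) * √(∫ s in a..b, h s ^ 2) := by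
  set I := ∫ s in a..b, h s
  set J := ∫ s in a..b, h s ^ 2
  have hexpand : ∫ s in a..b, ((b - a) * h s - I) ^ 2 = (b - a) * ((b - a) * J - I ^ 2) := by
    have hlin : IntervalIntegrable (fun s => (b - a) ^ 2 * h s ^ 2 - 2 * (b - a) * I * h s)
        MeasureTheory.volume a b := (hh2.const_mul _).sub (hh.const_mul _)
    simp_rw [show ∀ s, ((b - a) * h s - I) ^ 2
        = ((b - a) ^ 2 * h s ^ 2 - 2 * (b - a) * I * h s) + I ^ 2 from fun s => by ring]
    rw [integral_add hlin intervalIntegrable_const, integral_sub (hh2.const_mul _)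
      (hh.const_mul _), integral_const_mul, integral_const_mul, integral_const, smul_eq_mul]
    ring
  have hsq : I ^ 2 ≤ (b - a) * J := by
    rcases hab.eq_or_lt with rfl | hlt
    · simp [I]
    · have := hexpand ▸ integral_nonneg hab fun s _ => sq_nonneg ((b - a) * h s - I)
      nlinarith [sub_pos.2 hlt]
  calc I ≤ √(I ^ 2) := by rw [sqrt_sq_eq_abs]; exact le_abs_self I
    _ ≤ √((b - a) * J) := sqrt_le_sqrt hsq
    _ = √(b - a) * √J := sqrt_mul (sub_nonneg.2 hab) J

theorem hasDerivAt_matrix_iff {m n : Type*} [Fintype n] {M : ℝ → Matrix m n ℝ}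
    {M' : Matrix m n ℝ} {t : ℝ} :
    HasDerivAt M M' t ↔ ∀ i j, HasDerivAt (fun s => M s i j) (M' i j) t :=
  hasDerivAt_pi.trans (forall_congr' fun _ => hasDerivAt_pi)

section Frobenius

attribute [local instance] Matrix.frobeniusNormedAddCommGroup Matrix.frobeniusNormedSpace

variable {m n : Type*} [Fintype m] [Fintype n]

theorem frob_eq_norm (M : Matrix m n ℝ) : frob M = ‖M‖ := by
  rw [Matrix.frobenius_norm_def, frob, Real.sqrt_eq_rpow]
  simp [Real.norm_eq_abs, sq_abs, one_div]

theorem continuous_frob : Continuous (frob : Matrix m n ℝ → ℝ) := by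
  rw [show (frob : Matrix m n ℝ → ℝ) = (‖·‖) from funext frob_eq_norm]
  exact continuous_norm

def riccatiField (C : Matrix m n ℝ) (A : Matrix n n ℝ) (lam : ℝ) (E : Matrix n n ℝ) :
    Matrix n n ℝ :=
  Cᵀ * C - Aᵀ * E - E * A - (1 / lam) • (E * E)

theorem riccatiField_sub_riccatiField (C : Matrix m n ℝ) (A A' E E' : Matrix n n ℝ) (lam : ℝ) :
    riccatiField C A lam E - riccatiField C A' lam E' =
      -(Aᵀ * (E - E') + (E - E') * A) - ((A - A')ᵀ * E' + E' * (A - A'))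
        - (1 / lam) • (E * (E - E') + (E - E') * E') := by
  simp only [riccatiField, transpose_sub, Matrix.mul_sub, Matrix.sub_mul, smul_add, smul_sub]
  abel

theorem norm_riccatiField_sub_le (C : Matrix m n ℝ) {A A' E E' : Matrix n n ℝ} {lam a e : ℝ}
    (hlam : 0 < lam) (hA : ‖A‖ ≤ a) (hE : ‖E‖ ≤ e) (hE' : ‖E'‖ ≤ e) :
    ‖riccatiField C A lam E - riccatiField C A' lam E'‖
      ≤ 2 * (e / lam + a) * ‖E - E'‖ + 2 * e * ‖A - A'‖ := by
  have hF := norm_nonneg (E - E')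
  have hG := norm_nonneg (A - A')
  have hlinear : ‖Aᵀ * (E - E') + (E - E') * A‖ ≤ 2 * a * ‖E - E'‖ := by
    refine (norm_add_le_of_le (frobenius_norm_mul Aᵀ (E - E'))
      (frobenius_norm_mul (E - E') A)).trans ?_
    rw [frobenius_norm_transpose]
    nlinarith
  have hforcing : ‖(A - A')ᵀ * E' + E' * (A - A')‖ ≤ 2 * e * ‖A - A'‖ := by
    refine (norm_add_le_of_le (frobenius_norm_mul (A - A')ᵀ E')
      (frobenius_norm_mul E' (A - A'))).trans ?_
    rw [frobenius_norm_transpose]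
    nlinarith
  have hquadratic :
      ‖(1 / lam) • (E * (E - E') + (E - E') * E')‖ ≤ 2 * (e / lam) * ‖E - E'‖ := by
    rw [norm_smul, Real.norm_of_nonneg (by positivity), one_div_mul_eq_div, div_le_iff₀ hlam]
    refine (norm_add_le_of_le (frobenius_norm_mul E (E - E'))
      (frobenius_norm_mul (E - E') E')).trans ?_
    field_simp
    nlinarith
  rw [riccatiField_sub_riccatiField]
  refine (norm_sub_le_of_le (norm_sub_le_of_le (norm_neg _).le le_rfl) le_rfl).trans ?_
  linarith

theorem frob_sub_le_of_riccati (C : Matrix m n ℝ) {A A' E E' : ℝ → Matrix n n ℝ}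
    {lam T a e : ℝ} (hlam : 0 < lam) (ha : 0 ≤ a) (he : 0 ≤ e)
    (hA : ContinuousOn A (Icc 0 T)) (hA' : ContinuousOn A' (Icc 0 T)) (h0 : E 0 = E' 0)
    (hE : ∀ t ∈ Icc (0:ℝ) T, ∀ i j,
      HasDerivAt (fun s => E s i j) (riccatiField C (A t) lam (E t) i j) t)
    (hE' : ∀ t ∈ Icc (0:ℝ) T, ∀ i j,
      HasDerivAt (fun s => E' s i j) (riccatiField C (A' t) lam (E' t) i j) t)
    (hAb : ∀ t ∈ Icc (0:ℝ) T, frob (A t) ≤ a)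
    (hEb : ∀ t ∈ Icc (0:ℝ) T, frob (E t) ≤ e)
    (hE'b : ∀ t ∈ Icc (0:ℝ) T, frob (E' t) ≤ e) :
    ∀ t ∈ Icc (0:ℝ) T, frob (E t - E' t)
      ≤ exp (2 * (e / lam + a) * T) * (2 * e * ∫ s in 0..T, frob (A s - A' s)) := by
  simp only [frob_eq_norm] at *
  intro t ht
  have hF : ∀ t ∈ Icc (0:ℝ) T, HasDerivAt (fun s => E s - E' s)
      (riccatiField C (A t) lam (E t) - riccatiField C (A' t) lam (E' t)) t := fun t ht =>
    hasDerivAt_matrix_iff.2 fun i j => (hE t ht i j).sub (hE' t ht i j)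
  have hgap : ContinuousOn (fun s => ‖A s - A' s‖) (Icc 0 T) :=
    continuous_norm.comp_continuousOn (hA.sub hA')
  have hgronwall := norm_le_exp_mul_add_integral_of_norm_deriv_right_le (δ := 0)
    (g := fun s => 2 * e * ‖A s - A' s‖)
    (by positivity) (fun s hs => (hF s hs).continuousAt.continuousWithinAt)
    (fun s hs => (hF s (Ico_subset_Icc_self hs)).hasDerivWithinAt)
    (continuousOn_const.mul hgap) (fun s _ => mul_nonneg (by positivity) (norm_nonneg _))
    (by simp [h0])
    (fun s hs => norm_riccatiField_sub_le C hlam (hAb s (Ico_subset_Icc_self hs))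
      (hEb s (Ico_subset_Icc_self hs)) (hE'b s (Ico_subset_Icc_self hs))) t ht
  rw [sub_zero, zero_add, intervalIntegral.integral_const_mul] at hgronwall
  have hexp : exp (2 * (e / lam + a) * t) ≤ exp (2 * (e / lam + a) * T) := by
    gcongr
    exact ht.2
  have hint : ∫ s in 0..t, ‖A s - A' s‖ ≤ ∫ s in 0..T, ‖A s - A' s‖ :=
    integral_mono_interval le_rfl ht.1 ht.2 (MeasureTheory.ae_of_all _ fun _ => norm_nonneg _)
      (hgap.intervalIntegrable_of_Icc (ht.1.trans ht.2))
  refine hgronwall.trans (mul_le_mul hexp (by gcongr) ?_ (exp_nonneg _))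
  exact mul_nonneg (by positivity) (integral_nonneg ht.1 fun _ _ => norm_nonneg _)

end Frobenius

theorem statement7_general
    (d d' : ℕ) (hd : 1 ≤ d) (T : ℝ) (hT : 0 < T) (lam : ℝ) (hlam : 0 < lam)
    (C : Matrix (Fin d') (Fin d) ℝ)
    (A A' : ℝ → Matrix (Fin d) (Fin d) ℝ)
    (hA : ∀ i j, ContinuousOn (fun t => A t i j) (Icc 0 T))
    (hA' : ∀ i j, ContinuousOn (fun t => A' t i j) (Icc 0 T))
    (Q : Matrix (Fin d) (Fin d) ℝ)
    (E E' : ℝ → Matrix (Fin d) (Fin d) ℝ)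
    (hE0 : E 0 = Q) (hE'0 : E' 0 = Q)
    (hE : ∀ t ∈ Icc (0:ℝ) T, ∀ i j,
      HasDerivAt (fun s => E s i j)
        ((Cᵀ * C - (A t)ᵀ * E t - E t * A t - (1 / lam) • (E t * E t)) i j) t)
    (hE' : ∀ t ∈ Icc (0:ℝ) T, ∀ i j,
      HasDerivAt (fun s => E' s i j)
        ((Cᵀ * C - (A' t)ᵀ * E' t - E' t * A' t - (1 / lam) • (E' t * E' t)) i j) t)
    (Abar Ebar : ℝ) (hAbar : 0 ≤ Abar) (hEbar : 0 ≤ Ebar)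
    (hAb : ∀ t ∈ Icc (0:ℝ) T, frob (A t) ≤ Abar)
    (hEb : ∀ t ∈ Icc (0:ℝ) T, frob (E t) ≤ Ebar)
    (hE'b : ∀ t ∈ Icc (0:ℝ) T, frob (E' t) ≤ Ebar) :
    ∀ t ∈ Icc (0:ℝ) T,
      frob (E t - E' t) ≤
        2 * Real.sqrt (d * T) * Ebar *
          Real.sqrt (∫ s in (0:ℝ)..T, frob (A s - A' s) ^ 2) *
          Real.exp (2 * Real.sqrt d * (Ebar / lam + Abar) * T) := by
  intro t ht
  have hAc : ContinuousOn A (Icc 0 T) := continuousOn_pi.2 fun i => continuousOn_pi.2 (hA i)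
  have hA'c : ContinuousOn A' (Icc 0 T) := continuousOn_pi.2 fun i => continuousOn_pi.2 (hA' i)
  have hgap : ContinuousOn (fun s => frob (A s - A' s)) (Icc 0 T) :=
    continuous_frob.comp_continuousOn (hAc.sub hA'c)
  have hsqrt_d : 1 ≤ √(d : ℝ) := one_le_sqrt.2 (by exact_mod_cast hd)
  set J := ∫ s in (0:ℝ)..T, frob (A s - A' s) ^ 2
  calc frob (E t - E' t)
      ≤ exp (2 * (Ebar / lam + Abar) * T) * (2 * Ebar * ∫ s in 0..T, frob (A s - A' s)) :=
        frob_sub_le_of_riccati C hlam hAbar hEbar hAc hA'c (hE0.trans hE'0.symm) hE hE' hAb hEb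
          hE'b t ht
    _ ≤ exp (2 * (Ebar / lam + Abar) * T) * (2 * Ebar * (√T * √J)) := by
        gcongr
        simpa using intervalIntegral_le_sqrt_mul_sqrt_integral_sq hT.le
          (hgap.intervalIntegrable_of_Icc hT.le) ((hgap.pow 2).intervalIntegrable_of_Icc hT.le)
    _ ≤ exp (2 * √d * (Ebar / lam + Abar) * T) * (√d * (2 * Ebar * (√T * √J))) := by
        have hexp :
            exp (2 * (Ebar / lam + Abar) * T) ≤ exp (2 * √d * (Ebar / lam + Abar) * T) := by
          gcongr
          exact le_mul_of_one_le_right zero_le_two hsqrt_d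
        exact mul_le_mul hexp (le_mul_of_one_le_left (by positivity) hsqrt_d) (by positivity)
          (exp_nonneg _)
    _ = 2 * √(d * T) * Ebar * √J * exp (2 * √d * (Ebar / lam + Abar) * T) := by
        rw [sqrt_mul (Nat.cast_nonneg d)]
        ring

/-- Lipschitz-type bound on the Riccati solution with respect to the
coefficient `A`:
`‖E(t) − E'(t)‖ ≤ 2√(dT) Ē (∫₀ᵀ ‖A−A'‖²)^{1/2} e^{2√d (Ē/λ + Ā) T}`. -/
theorem statement7
    (d d' : ℕ) (hd : 1 ≤ d) (hd' : 1 ≤ d') (T : ℝ) (hT : 0 < T) (lam : ℝ) (hlam : 0 < lam)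
    (C : Matrix (Fin d') (Fin d) ℝ)
    (A A' : ℝ → Matrix (Fin d) (Fin d) ℝ)
    (hA : ∀ i j, ContinuousOn (fun t => A t i j) (Icc 0 T))
    (hA' : ∀ i j, ContinuousOn (fun t => A' t i j) (Icc 0 T))
    (Q : Matrix (Fin d) (Fin d) ℝ) (hQ : Q.PosSemidef)
    (E E' : ℝ → Matrix (Fin d) (Fin d) ℝ)
    (hE0 : E 0 = Q) (hE'0 : E' 0 = Q)
    (hE : ∀ t ∈ Icc (0:ℝ) T, ∀ i j,
      HasDerivAt (fun s => E s i j)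
        ((Cᵀ * C - (A t)ᵀ * E t - E t * A t - (1 / lam) • (E t * E t)) i j) t)
    (hE' : ∀ t ∈ Icc (0:ℝ) T, ∀ i j,
      HasDerivAt (fun s => E' s i j)
        ((Cᵀ * C - (A' t)ᵀ * E' t - E' t * A' t - (1 / lam) • (E' t * E' t)) i j) t)
    (Abar Ebar : ℝ) (hAbar : 0 ≤ Abar) (hEbar : 0 ≤ Ebar)
    (hAb : ∀ t ∈ Icc (0:ℝ) T, frob (A t) ≤ Abar)
    (hA'b : ∀ t ∈ Icc (0:ℝ) T, frob (A' t) ≤ Abar)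
    (hEb : ∀ t ∈ Icc (0:ℝ) T, frob (E t) ≤ Ebar)
    (hE'b : ∀ t ∈ Icc (0:ℝ) T, frob (E' t) ≤ Ebar) :
    ∀ t ∈ Icc (0:ℝ) T,
      frob (E t - E' t) ≤
        2 * Real.sqrt (d * T) * Ebar *
          Real.sqrt (∫ s in (0:ℝ)..T, frob (A s - A' s) ^ 2) *
          Real.exp (2 * Real.sqrt d * (Ebar / lam + Abar) * T) :=
  statement7_general d d' hd T hT lam hlam C A A' hA hA' Q E E' hE0 hE'0 hE hE' Abar Ebar hAbar
    hEbar hAb hEb hE'b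
end
end

section
/- Let x : [0,T] → ℝ^d be differentiable with x(T) = −E(T)⁻¹ h(T) and x'(t) = (A(t) + E(t)/λ) x(t) + r(t) + (1/λ) h(t) for all t ∈ [0,T], and define the control u(t) := (1/λ)(E(t) x(t) + h(t)) and the initial condition x₀ := x(0). Then x solves x'(t) = A(t)x(t) + r(t) + u(t), and the cost is exactly the closed-form value: x₀ᵀQx₀ + ∫₀ᵀ ‖ζ(t) − Cx(t)‖² dt + λ ∫₀ᵀ ‖u(t)‖² dt = ∫₀ᵀ (‖ζ(t)‖² − 2 r(t)ᵀ h(t) − (1/λ)‖h(t)‖²) dt − h(T)ᵀ E(T)⁻¹ h(T). -/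
/-! Completion of squares along the Riccati flow. Put `V t = x tᵀ E t x t + 2 h tᵀ x t`. The
Riccati equation for `E`, the adjoint equation for `h` and the closed-loop equation for `x` turn
`V'` into `‖ζ - C x‖² + λ‖u‖² - (‖ζ‖² - 2 rᵀh - ‖h‖²/λ)`, so integrating over `[0, T]` gives the
cost minus the closed-form integral as `V T - V 0`. Here `V 0 = x₀ᵀ Q x₀` because `h 0 = 0`, and
`V T = -h Tᵀ E T⁻¹ h T` because `E T x T = -h T`. -/

open Matrix Set intervalIntegral
open scoped Matrix

noncomputable section

/-- Euclidean norm of a real vector. -/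
def evnorm {n : Type*} [Fintype n] (v : n → ℝ) : ℝ :=
  Real.sqrt (∑ i, (v i) ^ 2)

open MeasureTheory

section
variable {m n : Type*} [Fintype n]

theorem evnorm_sq (v : n → ℝ) : evnorm v ^ 2 = v ⬝ᵥ v := by
  rw [evnorm, Real.sq_sqrt (by positivity)]
  simp only [dotProduct, pow_two]

@[fun_prop]
theorem continuous_evnorm : Continuous (evnorm : (n → ℝ) → ℝ) := by
  unfold evnorm
  fun_prop

section Calculus
variable {𝕜 : Type*} [NontriviallyNormedField 𝕜]

theorem HasDerivAt.dotProduct {f g : 𝕜 → n → 𝕜} {f' g' : n → 𝕜} {t : 𝕜}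
    (hf : HasDerivAt f f' t) (hg : HasDerivAt g g' t) :
    HasDerivAt (fun s => f s ⬝ᵥ g s) (f' ⬝ᵥ g t + f t ⬝ᵥ g') t := by
  have H := HasDerivAt.fun_sum fun i (_ : i ∈ Finset.univ) =>
    (hasDerivAt_pi.1 hf i).fun_mul (hasDerivAt_pi.1 hg i)
  simpa only [_root_.dotProduct, Finset.sum_add_distrib] using H

theorem HasDerivAt.matrix_mulVec {M : 𝕜 → Matrix m n 𝕜} {v : 𝕜 → n → 𝕜}
    {M' : Matrix m n 𝕜} {v' : n → 𝕜} {t : 𝕜}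
    (hM : ∀ i j, HasDerivAt (fun s => M s i j) (M' i j) t) (hv : HasDerivAt v v' t) :
    HasDerivAt (fun s => M s *ᵥ v s) (M' *ᵥ v t + M t *ᵥ v') t :=
  hasDerivAt_pi.2 fun i => (hasDerivAt_pi.2 (hM i)).dotProduct hv

end Calculus

theorem transpose_mulVec_dotProduct {R : Type*} [CommSemiring R] [Fintype m] (M : Matrix m n R)
    (v : m → R) (w : n → R) :
    Mᵀ *ᵥ v ⬝ᵥ w = v ⬝ᵥ M *ᵥ w := by
  rw [dotProduct_comm, Matrix.dotProduct_transpose_mulVec]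

/-- Up to a function of `t` alone, `costToArrive (E t) (h t) y` is the least cost of a
controlled trajectory that arrives at `y` at time `t`. -/
def costToArrive (E : Matrix n n ℝ) (h x : n → ℝ) : ℝ :=
  x ⬝ᵥ E *ᵥ x + 2 * (h ⬝ᵥ x)

theorem hasDerivAt_costToArrive {E : ℝ → Matrix n n ℝ} {h x : ℝ → n → ℝ}
    {E' : Matrix n n ℝ} {h' x' : n → ℝ} {t : ℝ}
    (hE : ∀ i j, HasDerivAt (fun s => E s i j) (E' i j) t) (hh : HasDerivAt h h' t)
    (hx : HasDerivAt x x' t) :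
    HasDerivAt (fun s => costToArrive (E s) (h s) (x s))
      (x' ⬝ᵥ E t *ᵥ x t + x t ⬝ᵥ (E' *ᵥ x t + E t *ᵥ x')
        + 2 * (h' ⬝ᵥ x t + h t ⬝ᵥ x')) t :=
  (hx.dotProduct (hx.matrix_mulVec hE)).add ((hh.dotProduct hx).const_mul 2)

/-- The left side is the derivative of `costToArrive` along the Riccati, adjoint and closed-loop
equations, with `μ` in the role of `1 / λ`. -/
theorem riccati_closedLoop_identity [Fintype m] (μ : ℝ) (C : Matrix m n ℝ) (a e : Matrix n n ℝ)
    (he : eᵀ = e) (x h r : n → ℝ) (z : m → ℝ) :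
    ((a + μ • e) *ᵥ x + r + μ • h) ⬝ᵥ e *ᵥ x
      + x ⬝ᵥ ((Cᵀ * C - aᵀ * e - e * a - μ • (e * e)) *ᵥ x
        + e *ᵥ ((a + μ • e) *ᵥ x + r + μ • h))
      + 2 * ((-((aᵀ + μ • e) *ᵥ h) - (Cᵀ *ᵥ z + e *ᵥ r)) ⬝ᵥ x
        + h ⬝ᵥ ((a + μ • e) *ᵥ x + r + μ • h))
    = (z - C *ᵥ x) ⬝ᵥ (z - C *ᵥ x) + μ * ((e *ᵥ x + h) ⬝ᵥ (e *ᵥ x + h))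
      - (z ⬝ᵥ z - 2 * (r ⬝ᵥ h) - μ * (h ⬝ᵥ h)) := by
  have he_left : ∀ v w : n → ℝ, v ⬝ᵥ e *ᵥ w = e *ᵥ v ⬝ᵥ w := fun v w => by
    rw [← he, transpose_mulVec_dotProduct, he]
  have he_comm : ∀ v w : n → ℝ, e *ᵥ v ⬝ᵥ w = e *ᵥ w ⬝ᵥ v := fun v w => by
    rw [← he_left, dotProduct_comm]
  simp only [add_mulVec, sub_mulVec, smul_mulVec, mulVec_add, mulVec_smul, ← mulVec_mulVec,
    dotProduct_add, add_dotProduct, dotProduct_sub, sub_dotProduct, dotProduct_smul,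
    smul_dotProduct, neg_dotProduct, smul_eq_mul, Matrix.dotProduct_transpose_mulVec,
    transpose_mulVec_dotProduct, he_left, he_comm (a *ᵥ x), he_comm h, he_comm r,
    dotProduct_comm (C *ᵥ x) z, dotProduct_comm h r]
  ring

theorem hasDerivAt_costToArrive_of_riccati [Fintype m] {lam : ℝ} {C : Matrix m n ℝ}
    {a : Matrix n n ℝ} {r : n → ℝ} {z : m → ℝ} {E : ℝ → Matrix n n ℝ} {h x : ℝ → n → ℝ} {t : ℝ}
    (hE : ∀ i j, HasDerivAt (fun s => E s i j)
      ((Cᵀ * C - aᵀ * E t - E t * a - (1 / lam) • (E t * E t)) i j) t)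
    (hEsymm : (E t)ᵀ = E t)
    (hh : HasDerivAt h (-((aᵀ + (1 / lam) • E t) *ᵥ h t) - (Cᵀ *ᵥ z + E t *ᵥ r)) t)
    (hx : HasDerivAt x ((a + (1 / lam) • E t) *ᵥ x t + r + (1 / lam) • h t) t) :
    HasDerivAt (fun s => costToArrive (E s) (h s) (x s))
      (evnorm (z - C *ᵥ x t) ^ 2 + lam * evnorm ((1 / lam) • (E t *ᵥ x t + h t)) ^ 2
        - (evnorm z ^ 2 - 2 * (r ⬝ᵥ h t) - (1 / lam) * evnorm (h t) ^ 2)) t := by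
  have hweight : lam * ((1 / lam) * (1 / lam)) = 1 / lam := by
    rw [mul_comm, one_div]
    simpa only [inv_inv] using mul_self_mul_inv lam⁻¹
  refine (hasDerivAt_costToArrive hE hh hx).congr_deriv ?_
  rw [riccati_closedLoop_identity _ _ _ _ hEsymm]
  simp only [evnorm_sq, dotProduct_smul, smul_dotProduct, smul_eq_mul, ← mul_assoc, hweight]

theorem costToArrive_neg_inv_mulVec [DecidableEq n] {E : Matrix n n ℝ} (hE : IsUnit E)
    (h : n → ℝ) : costToArrive E h (-(E⁻¹ *ᵥ h)) = -(h ⬝ᵥ E⁻¹ *ᵥ h) := by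
  have hEinv : E *ᵥ (E⁻¹ *ᵥ h) = h := by
    rw [mulVec_mulVec, mul_nonsing_inv _ ((isUnit_iff_isUnit_det E).mp hE), one_mulVec]
  simp only [costToArrive, mulVec_neg, hEinv, neg_dotProduct, dotProduct_neg, dotProduct_comm h]
  ring

theorem integral_cost_sub_eq_costToArrive_sub [Fintype m] {T lam : ℝ} (hT : 0 ≤ T)
    {C : Matrix m n ℝ} {A : ℝ → Matrix n n ℝ} {r : ℝ → n → ℝ} {ζ : ℝ → m → ℝ}
    {E : ℝ → Matrix n n ℝ} {h x : ℝ → n → ℝ}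
    (hr : ContinuousOn r (Icc 0 T)) (hζ : ContinuousOn ζ (Icc 0 T))
    (hE : ∀ t ∈ Icc 0 T, ∀ i j, HasDerivAt (fun s => E s i j)
      ((Cᵀ * C - (A t)ᵀ * E t - E t * A t - (1 / lam) • (E t * E t)) i j) t)
    (hEsymm : ∀ t ∈ Icc 0 T, (E t)ᵀ = E t)
    (hh : ∀ t ∈ Icc 0 T,
      HasDerivAt h (-(((A t)ᵀ + (1 / lam) • E t) *ᵥ h t) - (Cᵀ *ᵥ ζ t + E t *ᵥ r t)) t)
    (hx : ∀ t ∈ Icc 0 T,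
      HasDerivAt x ((A t + (1 / lam) • E t) *ᵥ x t + r t + (1 / lam) • h t) t) :
    (∫ t in 0..T, evnorm (ζ t - C *ᵥ x t) ^ 2)
      + lam * (∫ t in 0..T, evnorm ((1 / lam) • (E t *ᵥ x t + h t)) ^ 2)
      - (∫ t in 0..T, evnorm (ζ t) ^ 2 - 2 * (r t ⬝ᵥ h t) - (1 / lam) * evnorm (h t) ^ 2)
    = costToArrive (E T) (h T) (x T) - costToArrive (E 0) (h 0) (x 0) := by
  have hxc : ContinuousOn x (Icc 0 T) := fun t ht => (hx t ht).continuousAt.continuousWithinAt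
  have hhc : ContinuousOn h (Icc 0 T) := fun t ht => (hh t ht).continuousAt.continuousWithinAt
  have hEc : ContinuousOn E (Icc 0 T) := continuousOn_pi.2 fun i => continuousOn_pi.2
    fun j t ht => (hE t ht i j).continuousAt.continuousWithinAt
  have htrack : IntervalIntegrable (fun t => evnorm (ζ t - C *ᵥ x t) ^ 2) volume 0 T :=
    ContinuousOn.intervalIntegrable_of_Icc hT (by fun_prop)
  have hcontrol : IntervalIntegrable
      (fun t => lam * evnorm ((1 / lam) • (E t *ᵥ x t + h t)) ^ 2) volume 0 T :=
    ContinuousOn.intervalIntegrable_of_Icc hT (by fun_prop)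
  have hfree : IntervalIntegrable
      (fun t => evnorm (ζ t) ^ 2 - 2 * (r t ⬝ᵥ h t) - (1 / lam) * evnorm (h t) ^ 2) volume 0 T :=
    ContinuousOn.intervalIntegrable_of_Icc hT (by fun_prop)
  have hV : ∀ t ∈ uIcc 0 T, HasDerivAt (fun s => costToArrive (E s) (h s) (x s))
      (evnorm (ζ t - C *ᵥ x t) ^ 2 + lam * evnorm ((1 / lam) • (E t *ᵥ x t + h t)) ^ 2
        - (evnorm (ζ t) ^ 2 - 2 * (r t ⬝ᵥ h t) - (1 / lam) * evnorm (h t) ^ 2)) t := by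
    rw [uIcc_of_le hT]
    exact fun t ht =>
      hasDerivAt_costToArrive_of_riccati (hE t ht) (hEsymm t ht) (hh t ht) (hx t ht)
  rw [← integral_eq_sub_of_hasDerivAt hV ((htrack.add hcontrol).sub hfree),
    integral_sub (htrack.add hcontrol) hfree, integral_add htrack hcontrol,
    intervalIntegral.integral_const_mul]

end

theorem statement13_general
    (d d' : ℕ) (T : ℝ) (hT : 0 < T) (lam : ℝ)
    (C : Matrix (Fin d') (Fin d) ℝ)
    (A : ℝ → Matrix (Fin d) (Fin d) ℝ)
    (r : ℝ → Fin d → ℝ) (ζ : ℝ → Fin d' → ℝ)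
    (hr : ∀ i, ContinuousOn (fun t => r t i) (Icc 0 T))
    (hζ : ∀ i, ContinuousOn (fun t => ζ t i) (Icc 0 T))
    (Q : Matrix (Fin d) (Fin d) ℝ)
    (E : ℝ → Matrix (Fin d) (Fin d) ℝ)
    (hE0 : E 0 = Q)
    (hE : ∀ t ∈ Icc (0:ℝ) T, ∀ i j,
      HasDerivAt (fun s => E s i j)
        ((Cᵀ * C - (A t)ᵀ * E t - E t * A t - (1 / lam) • (E t * E t)) i j) t)
    (hEsymm : ∀ t ∈ Icc (0:ℝ) T, (E t)ᵀ = E t)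
    (hET : IsUnit (E T))
    (h : ℝ → Fin d → ℝ)
    (hh0 : h 0 = 0)
    (hh : ∀ t ∈ Icc (0:ℝ) T, ∀ i,
      HasDerivAt (fun s => h s i)
        ((-(((A t)ᵀ + (1 / lam) • E t).mulVec (h t))
          - (Cᵀ.mulVec (ζ t) + (E t).mulVec (r t))) i) t)
    (x : ℝ → Fin d → ℝ)
    (hxT : x T = -(E T)⁻¹.mulVec (h T))
    (hx : ∀ t ∈ Icc (0:ℝ) T, ∀ i,
      HasDerivAt (fun s => x s i)
        (((A t + (1 / lam) • E t).mulVec (x t) + r t + (1 / lam) • h t) i) t)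
    (u : ℝ → Fin d → ℝ)
    (hu : ∀ t, u t = (1 / lam) • ((E t).mulVec (x t) + h t))
    (x₀ : Fin d → ℝ) (hx₀ : x₀ = x 0) :
    (∀ t ∈ Icc (0:ℝ) T, ∀ i,
      HasDerivAt (fun s => x s i) (((A t).mulVec (x t) + r t + u t) i) t)
    ∧ x₀ ⬝ᵥ Q.mulVec x₀
        + (∫ t in (0:ℝ)..T, evnorm (ζ t - C.mulVec (x t)) ^ 2)
        + lam * ∫ t in (0:ℝ)..T, evnorm (u t) ^ 2
      = (∫ t in (0:ℝ)..T,
          (evnorm (ζ t) ^ 2 - 2 * (r t ⬝ᵥ h t) - (1 / lam) * evnorm (h t) ^ 2))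
        - h T ⬝ᵥ (E T)⁻¹.mulVec (h T) := by
  obtain rfl : u = fun t => (1 / lam) • (E t *ᵥ x t + h t) := funext hu
  subst hx₀ hE0
  refine ⟨fun t ht i => ?_, ?_⟩
  · have hloop : (A t + (1 / lam) • E t) *ᵥ x t + r t + (1 / lam) • h t
        = A t *ᵥ x t + r t + (1 / lam) • (E t *ᵥ x t + h t) := by
      rw [add_mulVec, smul_mulVec, smul_add]
      abel
    simpa only [hloop] using hx t ht i
  have hcost := integral_cost_sub_eq_costToArrive_sub hT.le (continuousOn_pi.2 hr)
    (continuousOn_pi.2 hζ) hE hEsymm (fun t ht => hasDerivAt_pi.2 (hh t ht))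
    (fun t ht => hasDerivAt_pi.2 (hx t ht))
  rw [hxT, costToArrive_neg_inv_mulVec hET, costToArrive, hh0, zero_dotProduct, mul_zero,
    add_zero] at hcost
  linarith

/-- the closed-loop trajectory with final value `x(T) = −E(T)⁻¹h(T)` and
control `u = (1/λ)(Ex + h)` solves the controlled ODE, and its cost equals exactly the
closed-form value `S`. -/
theorem statement13
    (d d' : ℕ) (hd : 1 ≤ d) (hd' : 1 ≤ d') (T : ℝ) (hT : 0 < T) (lam : ℝ) (hlam : 0 < lam)
    (C : Matrix (Fin d') (Fin d) ℝ)
    (A : ℝ → Matrix (Fin d) (Fin d) ℝ)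
    (r : ℝ → Fin d → ℝ) (ζ : ℝ → Fin d' → ℝ)
    (hA : ∀ i j, ContinuousOn (fun t => A t i j) (Icc 0 T))
    (hr : ∀ i, ContinuousOn (fun t => r t i) (Icc 0 T))
    (hζ : ∀ i, ContinuousOn (fun t => ζ t i) (Icc 0 T))
    (Q : Matrix (Fin d) (Fin d) ℝ) (hQ : Q.PosSemidef)
    (E : ℝ → Matrix (Fin d) (Fin d) ℝ)
    (hE0 : E 0 = Q)
    (hE : ∀ t ∈ Icc (0:ℝ) T, ∀ i j,
      HasDerivAt (fun s => E s i j)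
        ((Cᵀ * C - (A t)ᵀ * E t - E t * A t - (1 / lam) • (E t * E t)) i j) t)
    (hEsymm : ∀ t ∈ Icc (0:ℝ) T, (E t)ᵀ = E t)
    (hET : IsUnit (E T))
    (h : ℝ → Fin d → ℝ)
    (hh0 : h 0 = 0)
    (hh : ∀ t ∈ Icc (0:ℝ) T, ∀ i,
      HasDerivAt (fun s => h s i)
        ((-(((A t)ᵀ + (1 / lam) • E t).mulVec (h t))
          - (Cᵀ.mulVec (ζ t) + (E t).mulVec (r t))) i) t)
    (x : ℝ → Fin d → ℝ)
    (hxT : x T = -(E T)⁻¹.mulVec (h T))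
    (hx : ∀ t ∈ Icc (0:ℝ) T, ∀ i,
      HasDerivAt (fun s => x s i)
        (((A t + (1 / lam) • E t).mulVec (x t) + r t + (1 / lam) • h t) i) t)
    (u : ℝ → Fin d → ℝ)
    (hu : ∀ t, u t = (1 / lam) • ((E t).mulVec (x t) + h t))
    (x₀ : Fin d → ℝ) (hx₀ : x₀ = x 0) :
    (∀ t ∈ Icc (0:ℝ) T, ∀ i,
      HasDerivAt (fun s => x s i) (((A t).mulVec (x t) + r t + u t) i) t)
    ∧ x₀ ⬝ᵥ Q.mulVec x₀
        + (∫ t in (0:ℝ)..T, evnorm (ζ t - C.mulVec (x t)) ^ 2)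
        + lam * ∫ t in (0:ℝ)..T, evnorm (u t) ^ 2
      = (∫ t in (0:ℝ)..T,
          (evnorm (ζ t) ^ 2 - 2 * (r t ⬝ᵥ h t) - (1 / lam) * evnorm (h t) ^ 2))
        - h T ⬝ᵥ (E T)⁻¹.mulVec (h T) :=
  statement13_general d d' T hT lam C A r ζ hr hζ Q E hE0 hE hEsymm hET h hh0 hh x hxT hx u hu x₀
    hx₀
end
end
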